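/- arXiv:1205.6936 — 5 statements merged into one kernel-verified Lean document; each statement's English description precedes it below -/
import Mathlib

section
/- Let Y be a compact metric space, let ν and ν_1, ν_2, … be Borel probability measures on Y with ν_n → ν weakly, and let 0 < κ' < κ < 1. Then limsup_{n→∞} diam(ν_n, κ) ≤ diam(ν, κ'). -/
open MeasureTheory Filter Topology

/-- The partial diameter `diam(ν, κ)`: the infimum of the diameters of closed sets of
`ν`-measure at least `1 - κ`. -/
noncomputable def partialDiam {Y : Type*} [MetricSpace Y]
    [MeasurableSpace Y] (ν : Measure Y) (κ : ℝ) : ℝ :=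
  sInf (Metric.diam '' {Y₀ : Set Y | IsClosed Y₀ ∧ ENNReal.ofReal (1 - κ) ≤ ν Y₀})

/-!
Let `Y₀` be closed with `ν(Y₀) ≥ 1 - κ'` and let `ε > 0`. The open thickening `U` of `Y₀` by `ε`
has `ν(U) ≥ 1 - κ' > 1 - κ`, so by the portmanteau theorem `ν_n(U) > 1 - κ` for large `n`.
Its closure lies in the closed thickening, whose diameter is at most `diam Y₀ + 2ε`; hence
eventually `diam(ν_n, κ) ≤ diam Y₀ + 2ε`. Let `ε → 0`, then take the infimum over `Y₀`.
-/

section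

variable {Y : Type*} [MetricSpace Y] [MeasurableSpace Y]

lemma partialDiam_nonneg (μ : Measure Y) (κ : ℝ) : 0 ≤ partialDiam μ κ :=
  Real.sInf_nonneg <| by
    rintro _ ⟨s, -, rfl⟩
    exact Metric.diam_nonneg

lemma partialDiam_le_diam {μ : Measure Y} {κ : ℝ} {s : Set Y} (hs : IsClosed s)
    (hμs : ENNReal.ofReal (1 - κ) ≤ μ s) : partialDiam μ κ ≤ Metric.diam s := by
  refine csInf_le ⟨0, ?_⟩ ⟨s, ⟨hs, hμs⟩, rfl⟩
  rintro _ ⟨t, -, rfl⟩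
  exact Metric.diam_nonneg

lemma le_partialDiam {μ : Measure Y} [IsProbabilityMeasure μ] {κ d : ℝ} (hκ : 0 ≤ κ)
    (h : ∀ s : Set Y, IsClosed s → ENNReal.ofReal (1 - κ) ≤ μ s → d ≤ Metric.diam s) :
    d ≤ partialDiam μ κ := by
  have hne : (Metric.diam '' {s : Set Y | IsClosed s ∧ ENNReal.ofReal (1 - κ) ≤ μ s}).Nonempty :=
    ⟨_, Set.univ, ⟨isClosed_univ, by simpa [ENNReal.ofReal_le_one] using hκ⟩, rfl⟩
  refine le_csInf hne ?_
  rintro _ ⟨s, ⟨hs, hμs⟩, rfl⟩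
  exact h s hs hμs

lemma partialDiam_le_diam_add_of_le_measure_thickening {μ : Measure Y} {κ ε : ℝ} {s : Set Y}
    (hε : 0 ≤ ε) (hμs : ENNReal.ofReal (1 - κ) ≤ μ (Metric.thickening ε s)) :
    partialDiam μ κ ≤ Metric.diam s + 2 * ε :=
  calc partialDiam μ κ ≤ Metric.diam (Metric.cthickening ε s) :=
        partialDiam_le_diam Metric.isClosed_cthickening
          (hμs.trans (measure_mono (Metric.thickening_subset_cthickening ε s)))
    _ ≤ Metric.diam s + 2 * ε := Metric.diam_cthickening_le s hε

variable [BorelSpace Y]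

lemma eventually_partialDiam_le_diam_add {P : ℕ → ProbabilityMeasure Y}
    {P₀ : ProbabilityMeasure Y} (hP : Tendsto P atTop (𝓝 P₀)) {κ' κ ε : ℝ} (hκ : κ' < κ)
    (hκ' : κ' < 1) (hε : 0 < ε) {s : Set Y} (hμs : ENNReal.ofReal (1 - κ') ≤ (P₀ : Measure Y) s) :
    ∀ᶠ n in atTop, partialDiam (P n : Measure Y) κ ≤ Metric.diam s + 2 * ε := by
  have hlt : ENNReal.ofReal (1 - κ) <
      atTop.liminf fun n => (P n : Measure Y) (Metric.thickening ε s) :=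
    calc ENNReal.ofReal (1 - κ) < ENNReal.ofReal (1 - κ') :=
          ENNReal.ofReal_lt_ofReal_iff'.mpr ⟨by linarith, by linarith⟩
      _ ≤ (P₀ : Measure Y) (Metric.thickening ε s) :=
          hμs.trans (measure_mono (Metric.self_subset_thickening hε s))
      _ ≤ _ := ProbabilityMeasure.le_liminf_measure_open_of_tendsto hP Metric.isOpen_thickening
  filter_upwards [eventually_lt_of_lt_liminf hlt] with n hn
  exact partialDiam_le_diam_add_of_le_measure_thickening hε.le hn.le

lemma limsup_partialDiam_le_diam {P : ℕ → ProbabilityMeasure Y}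
    {P₀ : ProbabilityMeasure Y} (hP : Tendsto P atTop (𝓝 P₀)) {κ' κ : ℝ} (hκ : κ' < κ)
    (hκ' : κ' < 1) {s : Set Y} (hμs : ENNReal.ofReal (1 - κ') ≤ (P₀ : Measure Y) s) :
    limsup (fun n => partialDiam (P n : Measure Y) κ) atTop ≤ Metric.diam s := by
  have hcobdd : IsCoboundedUnder (· ≤ ·) atTop fun n => partialDiam (P n : Measure Y) κ :=
    isBoundedUnder_of_eventually_ge (Eventually.of_forall fun n => partialDiam_nonneg _ κ)
      |>.isCoboundedUnder_le
  refine le_of_forall_pos_le_add fun δ hδ => limsup_le_of_le hcobdd ?_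
  filter_upwards [eventually_partialDiam_le_diam_add hP hκ hκ' (half_pos hδ) hμs] with n hn
  linarith

end

theorem limsup_partialDiam_le_general
    (Y : Type*) [MetricSpace Y]
    [MeasurableSpace Y] [BorelSpace Y]
    (ν : ℕ → Measure Y) (νlim : Measure Y)
    [∀ n, IsProbabilityMeasure (ν n)] [IsProbabilityMeasure νlim]
    (hweak : ∀ g : C(Y, ℝ),
      Tendsto (fun n => ∫ y, g y ∂(ν n)) atTop (𝓝 (∫ y, g y ∂νlim)))
    (κ' κ : ℝ) (h0 : 0 < κ') (h1 : κ' < κ) (h2 : κ < 1) :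
    limsup (fun n => partialDiam (ν n) κ) atTop ≤ partialDiam νlim κ' := by
  let P : ℕ → ProbabilityMeasure Y := fun n => ⟨ν n, inferInstance⟩
  have hP : Tendsto P atTop (𝓝 ⟨νlim, inferInstance⟩) :=
    ProbabilityMeasure.tendsto_iff_forall_integral_tendsto.mpr fun g => hweak g.toContinuousMap
  exact le_partialDiam h0.le fun s _ hμs =>
    limsup_partialDiam_le_diam (P := P) hP h1 (h1.trans h2) hμs

/-- If `ν_n → ν` weakly on a compact metric space and `0 < κ' < κ < 1`,
then `limsup_n diam(ν_n, κ) ≤ diam(ν, κ')`. -/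
theorem limsup_partialDiam_le
    (Y : Type*) [MetricSpace Y] [CompactSpace Y]
    [MeasurableSpace Y] [BorelSpace Y]
    (ν : ℕ → Measure Y) (νlim : Measure Y)
    [∀ n, IsProbabilityMeasure (ν n)] [IsProbabilityMeasure νlim]
    (hweak : ∀ g : C(Y, ℝ),
      Tendsto (fun n => ∫ y, g y ∂(ν n)) atTop (𝓝 (∫ y, g y ∂νlim)))
    (κ' κ : ℝ) (h0 : 0 < κ') (h1 : κ' < κ) (h2 : κ < 1) :
    limsup (fun n => partialDiam (ν n) κ) atTop ≤ partialDiam νlim κ' :=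
  limsup_partialDiam_le_general Y ν νlim hweak κ' κ h0 h1 h2
end

section
/- Let Y be a compact metric space, let ν and ν_1, ν_2, … be Borel probability measures on Y with ν_n → ν weakly, and let 0 < κ < 1. Then liminf_{n→∞} diam(ν_n, κ) ≥ diam(ν, κ). -/
open MeasureTheory Filter Topology

/-!
If `diam(ν_n, κ) < r` along a subsequence, pick closed sets `F_n` with
`ν_n(F_n) ≥ 1 - κ` and `diam F_n < r`. The closed subsets of a compact metric space form a
compact space for the Hausdorff distance, so a further subsequence of the `F_n` converges to a
closed set `K`. Diameters pass to the Hausdorff limit, so `diam K ≤ r`. Since `F_n` eventually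
lies in every closed `δ`-thickening of `K`, the portmanteau theorem gives
`ν(cthickening δ K) ≥ 1 - κ`, and letting `δ → 0` yields `ν(K) ≥ 1 - κ`.
-/

open Metric TopologicalSpace

lemma ofReal_one_sub_le_measure_univ {Y : Type*} [MeasurableSpace Y] {ν : Measure Y}
    [IsProbabilityMeasure ν] {κ : ℝ} (hκ : 0 ≤ κ) : ENNReal.ofReal (1 - κ) ≤ ν Set.univ := by
  rw [measure_univ]
  exact ENNReal.ofReal_le_one.2 (by linarith)

section PartialDiam

variable {Y : Type*} [MetricSpace Y] [MeasurableSpace Y] {ν : Measure Y} {κ r : ℝ}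

lemma partialDiam_le_diam_s2 {F : Set Y} (hF : IsClosed F) (hνF : ENNReal.ofReal (1 - κ) ≤ ν F) :
    partialDiam ν κ ≤ diam F :=
  csInf_le ⟨0, by rintro _ ⟨s, -, rfl⟩; exact diam_nonneg⟩ ⟨F, ⟨hF, hνF⟩, rfl⟩

lemma partialDiam_le_diam_univ [IsProbabilityMeasure ν] (hκ : 0 ≤ κ) :
    partialDiam ν κ ≤ diam (Set.univ : Set Y) :=
  partialDiam_le_diam_s2 isClosed_univ (ofReal_one_sub_le_measure_univ hκ)

lemma exists_isClosed_diam_lt_of_partialDiam_lt [IsProbabilityMeasure ν] (hκ : 0 ≤ κ)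
    (h : partialDiam ν κ < r) :
    ∃ F : Set Y, IsClosed F ∧ ENNReal.ofReal (1 - κ) ≤ ν F ∧ diam F < r := by
  rw [partialDiam] at h
  obtain ⟨_, ⟨F, ⟨hF, hνF⟩, rfl⟩, hFr⟩ :=
    exists_lt_of_csInf_lt
      (by exact ⟨_, Set.univ, ⟨isClosed_univ, ofReal_one_sub_le_measure_univ hκ⟩, rfl⟩) h
  exact ⟨F, hF, hνF, hFr⟩

end PartialDiam

section HausdorffLimit

variable {Y ι : Type*} [MetricSpace Y] {l : Filter ι} {F : ι → Closeds Y} {K : Closeds Y}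

lemma subset_cthickening_of_hausdorffEDist_le {s t : Set Y} {δ : ℝ}
    (h : hausdorffEDist s t ≤ ENNReal.ofReal δ) : s ⊆ cthickening δ t :=
  fun _ hx => mem_cthickening_iff.2 ((infEDist_le_hausdorffEDist_of_mem hx).trans h)

lemma TopologicalSpace.Closeds.eventually_subset_cthickening_of_tendsto
    (hFK : Tendsto F l (𝓝 K)) {δ : ℝ} (hδ : 0 < δ) :
    ∀ᶠ i in l, (F i : Set Y) ⊆ cthickening δ K ∧ (K : Set Y) ⊆ cthickening δ (F i) := by
  filter_upwards [EMetric.tendsto_nhds.1 hFK _ (ENNReal.ofReal_pos.2 hδ)] with i hi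
  rw [Closeds.edist_eq] at hi
  exact ⟨subset_cthickening_of_hausdorffEDist_le hi.le,
    subset_cthickening_of_hausdorffEDist_le (hausdorffEDist_comm.trans_lt hi).le⟩

lemma TopologicalSpace.Closeds.diam_le_of_tendsto [BoundedSpace Y] [l.NeBot]
    (hFK : Tendsto F l (𝓝 K)) {r : ℝ} (hr : ∀ i, diam (F i : Set Y) ≤ r) :
    diam (K : Set Y) ≤ r := by
  refine le_of_forall_pos_le_add fun ε hε => ?_
  obtain ⟨i, -, hKF⟩ := (eventually_subset_cthickening_of_tendsto hFK (half_pos hε)).exists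
  calc diam (K : Set Y) ≤ diam (cthickening (ε / 2) (F i : Set Y)) :=
        diam_mono hKF (Bornology.IsBounded.all _)
    _ ≤ diam (F i : Set Y) + 2 * (ε / 2) := diam_cthickening_le _ (half_pos hε).le
    _ ≤ r + ε := by linarith [hr i]

variable [MeasurableSpace Y] [OpensMeasurableSpace Y] [l.NeBot]

lemma MeasureTheory.ProbabilityMeasure.le_measure_of_tendsto
    {P : ι → ProbabilityMeasure Y} {Q : ProbabilityMeasure Y} (hPQ : Tendsto P l (𝓝 Q))
    (hFK : Tendsto F l (𝓝 K)) {a : ENNReal} (ha : ∀ i, a ≤ (P i : Measure Y) (F i)) :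
    a ≤ (Q : Measure Y) K := by
  have h_thick : ∀ δ > 0, a ≤ (Q : Measure Y) (cthickening δ K) := fun δ hδ =>
    calc a ≤ limsup (fun i => (P i : Measure Y) (cthickening δ K)) l :=
          le_limsup_of_frequently_le
            ((Closeds.eventually_subset_cthickening_of_tendsto hFK hδ).mono
              fun i hi => (ha i).trans (measure_mono hi.1)).frequently
    _ ≤ (Q : Measure Y) (cthickening δ K) :=
          ProbabilityMeasure.limsup_measure_closed_le_of_tendsto hPQ isClosed_cthickening
  exact ge_of_tendsto
    ((tendsto_measure_cthickening_of_isClosed ⟨1, one_pos, measure_ne_top _ _⟩ K.isClosed).mono_left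
      nhdsWithin_le_nhds)
    (eventually_nhdsWithin_of_forall (s := Set.Ioi (0 : ℝ)) h_thick)

end HausdorffLimit

lemma MeasureTheory.ProbabilityMeasure.exists_isClosed_le_measure_diam_le {Y : Type*}
    [MetricSpace Y] [CompactSpace Y] [MeasurableSpace Y] [OpensMeasurableSpace Y]
    {P : ℕ → ProbabilityMeasure Y} {Q : ProbabilityMeasure Y} (hPQ : Tendsto P atTop (𝓝 Q))
    {F : ℕ → Set Y} (hF : ∀ n, IsClosed (F n)) {a : ENNReal}
    (ha : ∀ n, a ≤ (P n : Measure Y) (F n)) {r : ℝ} (hr : ∀ n, diam (F n) ≤ r) :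
    ∃ K : Set Y, IsClosed K ∧ a ≤ (Q : Measure Y) K ∧ diam K ≤ r := by
  obtain ⟨K, φ, hφ, hK⟩ := CompactSpace.tendsto_subseq fun n => (⟨F n, hF n⟩ : Closeds Y)
  exact ⟨K, K.isClosed, le_measure_of_tendsto (hPQ.comp hφ.tendsto_atTop) hK fun n => ha (φ n),
    Closeds.diam_le_of_tendsto hK fun n => hr (φ n)⟩

theorem liminf_partialDiam_ge_general
    (Y : Type*) [MetricSpace Y] [CompactSpace Y]
    [MeasurableSpace Y] [BorelSpace Y]
    (ν : ℕ → Measure Y) (νlim : Measure Y)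
    [∀ n, IsProbabilityMeasure (ν n)] [IsProbabilityMeasure νlim]
    (hweak : ∀ g : C(Y, ℝ),
      Tendsto (fun n => ∫ y, g y ∂(ν n)) atTop (𝓝 (∫ y, g y ∂νlim)))
    (κ : ℝ) (h0 : 0 < κ) :
    partialDiam νlim κ ≤ liminf (fun n => partialDiam (ν n) κ) atTop := by
  have hP : Tendsto (β := ProbabilityMeasure Y) (fun n => ⟨ν n, inferInstance⟩) atTop
      (𝓝 ⟨νlim, inferInstance⟩) :=
    ProbabilityMeasure.tendsto_iff_forall_integral_tendsto.2 fun g => hweak g.toContinuousMap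
  have hcobdd : IsCoboundedUnder (· ≥ ·) atTop (fun n => partialDiam (ν n) κ) :=
    (isBoundedUnder_of ⟨_, fun n => partialDiam_le_diam_univ h0.le⟩).isCoboundedUnder_ge
  refine le_of_forall_gt_imp_ge_of_dense fun r hr => ?_
  obtain ⟨φ, hφ, hφr⟩ := extraction_of_frequently_atTop (frequently_lt_of_liminf_lt hcobdd hr)
  choose F hF hνF hFr using fun n => exists_isClosed_diam_lt_of_partialDiam_lt h0.le (hφr n)
  obtain ⟨K, hK, hνK, hKr⟩ := ProbabilityMeasure.exists_isClosed_le_measure_diam_le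
    (hP.comp hφ.tendsto_atTop) hF hνF fun n => (hFr n).le
  exact (partialDiam_le_diam_s2 hK hνK).trans hKr

/-- If `ν_n → ν` weakly on a compact metric space and `0 < κ < 1`,
then `liminf_n diam(ν_n, κ) ≥ diam(ν, κ)`. -/
theorem liminf_partialDiam_ge
    (Y : Type*) [MetricSpace Y] [CompactSpace Y]
    [MeasurableSpace Y] [BorelSpace Y]
    (ν : ℕ → Measure Y) (νlim : Measure Y)
    [∀ n, IsProbabilityMeasure (ν n)] [IsProbabilityMeasure νlim]
    (hweak : ∀ g : C(Y, ℝ),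
      Tendsto (fun n => ∫ y, g y ∂(ν n)) atTop (𝓝 (∫ y, g y ∂νlim)))
    (κ : ℝ) (h0 : 0 < κ) (h1 : κ < 1) :
    partialDiam νlim κ ≤ liminf (fun n => partialDiam (ν n) κ) atTop :=
  liminf_partialDiam_ge_general Y ν νlim hweak κ h0
end

section
/- For each integer m > 0 and each ε > 0 there exists δ > 0 with the following property. Let G = ({a_1,…,a_m}, d_G, μ) and H = ({a_1,…,a_m}, d_H, ν) be finite pseudometric measure spaces on the same m-point set, with pseudometrics taking values in [0,1] and probability weights μ, ν, such that |μ(a_i) − ν(a_i)| ≤ δ for all 1 ≤ i ≤ m and |d_G(a_i,a_j) − d_H(a_i,a_j)| ≤ δ for all 1 ≤ i, j ≤ m. Then there exist measure-preserving Borel maps Ψ₁ : ([0,1], λ) → ({a_1,…,a_m}, μ) and Ψ₂ : ([0,1], λ) → ({a_1,…,a_m}, ν) and a Borel set S ⊆ [0,1] with λ(S) ≤ ε such that |d_G(Ψ₁(x), Ψ₁(y)) − d_H(Ψ₂(x), Ψ₂(y))| ≤ ε for all x, y ∈ [0,1] \ S. -/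
/-!
Realize both weight vectors by quantile maps: `[0,1]` is cut into consecutive intervals of
lengths `w i`, and `Ψ t` is the index of the interval containing `t`. The two maps can only
disagree at points lying between corresponding cut points, and the `m - 1` interior cut points of
the two partitions are within `m δ` of each other, so the disagreement set has measure at most
`m² δ`. Off that set `Ψ₁ = Ψ₂`, and the distances differ by at most `δ`.
-/

open MeasureTheory Finset

section QuantileIndex

variable {m : ℕ}

/-- For monotone `c` with `c 0 ≤ t < c m`, the index `i` with `t ∈ [c i, c (i + 1))`. -/
noncomputable def quantileIndex (hm : 0 < m) (c : ℕ → ℝ) (t : ℝ) : Fin m :=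
  ⟨#{k ∈ Ioo 0 m | c k ≤ t}, by
    have := card_filter_le (Ioo 0 m) (c · ≤ t)
    rw [Nat.card_Ioo] at this
    omega⟩

variable (hm : 0 < m) {c : ℕ → ℝ}

theorem quantileIndex_mono (c : ℕ → ℝ) : Monotone (quantileIndex hm c) := fun _ _ hts =>
  Fin.mk_le_mk.2 <| card_le_card <| monotone_filter_right _ fun _ _ hk => le_trans hk hts

theorem measurable_quantileIndex (c : ℕ → ℝ) : Measurable (quantileIndex hm c) :=
  (quantileIndex_mono hm c).measurable

theorem le_quantileIndex_iff (hc : Monotone c) {t : ℝ} (h0 : c 0 ≤ t) (hlt : t < c m) {k : ℕ}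
    (hk : k ≤ m) : k ≤ (quantileIndex hm c t : ℕ) ↔ c k ≤ t := by
  rcases k.eq_zero_or_pos with rfl | hk0
  · simp [h0]
  constructor
  · intro hle
    by_contra! hck
    have hsub : {j ∈ Ioo 0 m | c j ≤ t} ⊆ Ico 1 k := fun j hj => by
      rw [mem_filter, mem_Ioo] at hj
      exact mem_Ico.2 ⟨hj.1.1, hc.reflect_lt (hj.2.trans_lt hck)⟩
    have := card_le_card hsub
    simp only [quantileIndex, Nat.card_Ico] at hle this
    omega
  · intro hck
    have hkm : k < m := hk.lt_of_ne (by rintro rfl; linarith)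
    have hsub : Icc 1 k ⊆ {j ∈ Ioo 0 m | c j ≤ t} := fun j hj => by
      rw [mem_Icc] at hj
      exact mem_filter.2 ⟨mem_Ioo.2 ⟨hj.1, by omega⟩, (hc hj.2).trans hck⟩
    have := card_le_card hsub
    simpa only [quantileIndex, Nat.card_Icc, Nat.add_sub_cancel] using this

theorem quantileIndex_eq_iff (hc : Monotone c) {t : ℝ} (h0 : c 0 ≤ t) (hlt : t < c m)
    (i : Fin m) : quantileIndex hm c t = i ↔ t ∈ Set.Ico (c i) (c (i + 1)) := by
  have hi := le_quantileIndex_iff hm hc h0 hlt i.is_lt.le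
  have hi1 := le_quantileIndex_iff hm hc h0 hlt i.is_lt
  rw [Set.mem_Ico, ← hi, ← not_le, ← hi1, Fin.ext_iff]
  omega

theorem volume_quantileIndex_eq (hc : Monotone c) (h0 : c 0 = 0) (h1 : c m = 1) (i : Fin m) :
    volume {t ∈ Set.Icc (0 : ℝ) 1 | quantileIndex hm c t = i} =
      ENNReal.ofReal (c (i + 1) - c i) := by
  have hIco : Set.Ico 0 1 ∩ {t | quantileIndex hm c t = i} = Set.Ico (c i) (c (i + 1)) := by
    ext t
    simp only [Set.mem_inter_iff, Set.mem_ofPred_eq]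
    constructor
    · rintro ⟨ht, hi⟩
      exact (quantileIndex_eq_iff hm hc (h0 ▸ ht.1) (h1 ▸ ht.2) i).1 hi
    · intro ht
      have ht0 : 0 ≤ t := h0 ▸ (hc (Nat.zero_le _)).trans ht.1
      have ht1 : t < 1 := h1 ▸ ht.2.trans_le (hc i.is_lt)
      exact ⟨⟨ht0, ht1⟩, (quantileIndex_eq_iff hm hc (h0 ▸ ht0) (h1 ▸ ht1) i).2 ht⟩
  calc volume (Set.Icc 0 1 ∩ {t | quantileIndex hm c t = i})
      = volume (Set.Ico 0 1 ∩ {t | quantileIndex hm c t = i}) :=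
        measure_congr (Ico_ae_eq_Icc.symm.inter (ae_eq_refl _))
    _ = ENNReal.ofReal (c (i + 1) - c i) := by rw [hIco, Real.volume_Ico]

theorem exists_mem_uIcc_of_quantileIndex_ne {d : ℕ → ℝ} {t : ℝ}
    (h : quantileIndex hm c t ≠ quantileIndex hm d t) :
    ∃ k ∈ Ioo 0 m, t ∈ Set.uIcc (c k) (d k) := by
  contrapose! h
  suffices hfilter : {k ∈ Ioo 0 m | c k ≤ t} = {k ∈ Ioo 0 m | d k ≤ t} from
    Fin.ext (congrArg card hfilter)
  refine filter_congr fun k hk => ?_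
  have hsep := h k hk
  rw [Set.mem_uIcc] at hsep
  push Not at hsep
  exact ⟨fun hck => (hsep.1 hck).le, fun hdk => (hsep.2 hdk).le⟩

theorem volume_quantileIndex_ne_le (d : ℕ → ℝ) :
    volume {t | quantileIndex hm c t ≠ quantileIndex hm d t} ≤
      ENNReal.ofReal (∑ k ∈ Ioo 0 m, |d k - c k|) := by
  calc volume {t | quantileIndex hm c t ≠ quantileIndex hm d t}
      ≤ volume (⋃ k ∈ Ioo 0 m, Set.uIcc (c k) (d k)) := by
        refine measure_mono fun t ht => ?_
        obtain ⟨k, hk, htk⟩ := exists_mem_uIcc_of_quantileIndex_ne hm ht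
        exact Set.mem_biUnion hk htk
    _ ≤ ∑ k ∈ Ioo 0 m, volume (Set.uIcc (c k) (d k)) := measure_biUnion_finset_le _ _
    _ = ENNReal.ofReal (∑ k ∈ Ioo 0 m, |d k - c k|) := by
        simp only [Real.volume_interval]
        exact (ENNReal.ofReal_sum_of_nonneg fun _ _ => abs_nonneg _).symm

end QuantileIndex

section CumSum

variable {m : ℕ}

noncomputable def cumSum (w : Fin m → ℝ) (k : ℕ) : ℝ := ∑ i : Fin m with i.val < k, w i

theorem cumSum_zero (w : Fin m → ℝ) : cumSum w 0 = 0 := by simp [cumSum]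

theorem cumSum_eq_sum (w : Fin m → ℝ) : cumSum w m = ∑ i, w i := by simp [cumSum]

theorem cumSum_succ (w : Fin m → ℝ) (i : Fin m) : cumSum w (i + 1) = cumSum w i + w i := by
  have hfilter : filter (fun j : Fin m => j.val < i + 1) univ =
      insert i (filter (fun j : Fin m => j.val < i) univ) := by
    ext j
    simp only [mem_filter, mem_univ, true_and, mem_insert, Fin.ext_iff]
    omega
  rw [cumSum, hfilter, sum_insert (by simp), add_comm, cumSum]

theorem monotone_cumSum {w : Fin m → ℝ} (hw : ∀ i, 0 ≤ w i) : Monotone (cumSum w) :=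
  fun _ _ hkl => sum_le_sum_of_subset_of_nonneg
    (monotone_filter_right _ fun _ _ hi => lt_of_lt_of_le hi hkl) fun i _ _ => hw i

theorem abs_cumSum_sub_le {w₁ w₂ : Fin m → ℝ} {δ : ℝ} (hδ : ∀ i, |w₁ i - w₂ i| ≤ δ) (k : ℕ) :
    |cumSum w₁ k - cumSum w₂ k| ≤ m * δ := by
  calc |cumSum w₁ k - cumSum w₂ k|
      = |∑ i : Fin m with i.val < k, (w₁ i - w₂ i)| := by rw [cumSum, cumSum, sum_sub_distrib]
    _ ≤ ∑ i : Fin m with i.val < k, |w₁ i - w₂ i| := abs_sum_le_sum_abs _ _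
    _ ≤ ∑ i, |w₁ i - w₂ i| :=
        sum_le_sum_of_subset_of_nonneg (filter_subset _ _) fun _ _ _ => abs_nonneg _
    _ ≤ ∑ _i : Fin m, δ := sum_le_sum fun i _ => hδ i
    _ = m * δ := by simp

end CumSum

section QuantileMap

variable {m : ℕ} (hm : 0 < m) {w w₁ w₂ : Fin m → ℝ}

theorem volume_quantileIndex_cumSum_eq (hw : ∀ i, 0 ≤ w i) (hsum : ∑ i, w i = 1) (i : Fin m) :
    volume {t ∈ Set.Icc (0 : ℝ) 1 | quantileIndex hm (cumSum w) t = i} = ENNReal.ofReal (w i) := by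
  rw [volume_quantileIndex_eq hm (monotone_cumSum hw) (cumSum_zero w)
    ((cumSum_eq_sum w).trans hsum), cumSum_succ, add_sub_cancel_left]

theorem volume_quantileIndex_cumSum_ne_le {δ : ℝ} (hδ : ∀ i, |w₁ i - w₂ i| ≤ δ) :
    volume {t | quantileIndex hm (cumSum w₁) t ≠ quantileIndex hm (cumSum w₂) t} ≤
      ENNReal.ofReal (m ^ 2 * δ) := by
  refine (volume_quantileIndex_ne_le hm _).trans (ENNReal.ofReal_le_ofReal ?_)
  have hδ0 : 0 ≤ δ := (abs_nonneg _).trans (hδ ⟨0, hm⟩)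
  calc ∑ k ∈ Ioo 0 m, |cumSum w₂ k - cumSum w₁ k|
      ≤ ∑ _k ∈ Ioo 0 m, (m * δ) := sum_le_sum fun k _ => by
        rw [abs_sub_comm]
        exact abs_cumSum_sub_le hδ k
    _ = (m - 1 : ℕ) * (m * δ) := by rw [sum_const, Nat.card_Ioo, nsmul_eq_mul, Nat.sub_zero]
    _ ≤ m ^ 2 * δ := by
        rw [sq, mul_assoc]
        gcongr
        exact_mod_cast Nat.sub_le m 1

end QuantileMap

/-- (Lemma `h2`.)  For every `m > 0` and `ε > 0` there is `δ > 0` such that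
any two `[0,1]`-valued pseudometric probability spaces on the same `m`-point set whose
distances and weights differ by at most `δ` entrywise are at `□̲₁`-distance at most `ε`:
there are measure-preserving Borel maps `Ψ₁, Ψ₂ : ([0,1], λ) → Fin m` (pushing Lebesgue
measure to the respective weights) and a Borel set `S ⊆ [0,1]` with `λ S ≤ ε` such that
`|d_G(Ψ₁ x, Ψ₁ y) - d_H(Ψ₂ x, Ψ₂ y)| ≤ ε` off `S`. -/
theorem finite_mm_spaces_close
    (m : ℕ) (hm : 0 < m) (ε : ℝ) (hε : 0 < ε) :
    ∃ δ : ℝ, 0 < δ ∧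
      ∀ (dG dH : Fin m → Fin m → ℝ) (w₁ w₂ : Fin m → ℝ),
        (∀ i j, dG i j ∈ Set.Icc (0:ℝ) 1) → (∀ i j, dH i j ∈ Set.Icc (0:ℝ) 1) →
        (∀ i, dG i i = 0) → (∀ i, dH i i = 0) →
        (∀ i j, dG i j = dG j i) → (∀ i j, dH i j = dH j i) →
        (∀ i j l, dG i l ≤ dG i j + dG j l) → (∀ i j l, dH i l ≤ dH i j + dH j l) →
        (∀ i, 0 ≤ w₁ i) → (∀ i, 0 ≤ w₂ i) →
        (∑ i, w₁ i = 1) → (∑ i, w₂ i = 1) →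
        (∀ i, |w₁ i - w₂ i| ≤ δ) →
        (∀ i j, |dG i j - dH i j| ≤ δ) →
        ∃ (Ψ₁ Ψ₂ : ℝ → Fin m) (S : Set ℝ),
          Measurable Ψ₁ ∧ Measurable Ψ₂ ∧
          (∀ i, volume {t ∈ Set.Icc (0:ℝ) 1 | Ψ₁ t = i} = ENNReal.ofReal (w₁ i)) ∧
          (∀ i, volume {t ∈ Set.Icc (0:ℝ) 1 | Ψ₂ t = i} = ENNReal.ofReal (w₂ i)) ∧
          MeasurableSet S ∧ S ⊆ Set.Icc (0:ℝ) 1 ∧ volume S ≤ ENNReal.ofReal ε ∧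
          ∀ t ∈ Set.Icc (0:ℝ) 1 \ S, ∀ s ∈ Set.Icc (0:ℝ) 1 \ S,
            |dG (Ψ₁ t) (Ψ₁ s) - dH (Ψ₂ t) (Ψ₂ s)| ≤ ε := by
  have hm2 : (1 : ℝ) ≤ m ^ 2 := one_le_pow₀ (by exact_mod_cast hm)
  refine ⟨ε / m ^ 2, by positivity, ?_⟩
  intro dG dH w₁ w₂ _ _ _ _ _ _ _ _ hw₁ hw₂ hs₁ hs₂ hwδ hdδ
  set Ψ₁ := quantileIndex hm (cumSum w₁)
  set Ψ₂ := quantileIndex hm (cumSum w₂)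
  have hΨ₁ := measurable_quantileIndex hm (cumSum w₁)
  have hΨ₂ := measurable_quantileIndex hm (cumSum w₂)
  refine ⟨Ψ₁, Ψ₂, {t ∈ Set.Icc 0 1 | Ψ₁ t ≠ Ψ₂ t}, hΨ₁, hΨ₂,
    volume_quantileIndex_cumSum_eq hm hw₁ hs₁, volume_quantileIndex_cumSum_eq hm hw₂ hs₂,
    measurableSet_Icc.inter (measurableSet_eq_fun hΨ₁ hΨ₂).compl, fun _ ht => ht.1, ?_, ?_⟩
  · calc volume {t ∈ Set.Icc 0 1 | Ψ₁ t ≠ Ψ₂ t}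
        ≤ volume {t | Ψ₁ t ≠ Ψ₂ t} := measure_mono fun _ ht => ht.2
      _ ≤ ENNReal.ofReal (m ^ 2 * (ε / m ^ 2)) := volume_quantileIndex_cumSum_ne_le hm hwδ
      _ = ENNReal.ofReal ε := by rw [mul_div_cancel₀ _ (by positivity)]
  · intro t ht s hs
    have het : Ψ₁ t = Ψ₂ t := not_not.1 fun h => ht.2 ⟨ht.1, h⟩
    have hes : Ψ₁ s = Ψ₂ s := not_not.1 fun h => hs.2 ⟨hs.1, h⟩
    rw [het, hes]
    exact (hdδ _ _).trans (div_le_self hε.le hm2)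
end

section
/- Fix r ≥ 1, K > 0 and for each pair 1 ≤ i ≤ j ≤ r a K-Lipschitz function g_{ij} : [0,1] → ℝ. For every ε > 0 there exists δ > 0 with the following property. Let f₁, f₂ : [0,1]² → P([0,1]) be Borel measurable maps into the space P([0,1]) of Borel probability measures on [0,1] with its weak topology, and suppose there is a Borel set S ⊆ [0,1] with λ(S) ≤ δ such that for all x, y ∈ [0,1] \ S, sup{ |∫ h df₁(x,y) − ∫ h df₂(x,y)| : h : [0,1] → ℝ 1-Lipschitz } ≤ δ. Then |t(g, f₁) − t(g, f₂)| < ε. -/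
/-!
Let `N` be the number of pairs `i ≤ j` and `M ≥ 1` a bound for all `g_{ij}` on `[0,1]`, so that
both integrands of `t(g, ·)` are bounded by `M ^ N`. Let `B ⊆ [0,1]^r` be the set of points with
some coordinate in `S`; it has measure at most `r δ`. Off `B`, each factor
`∫ g_{ij} d f(x_i, x_j)` moves by at most `K δ` (apply the hypothesis to `g_{ij} / K`), so by
telescoping the product moves by at most `M ^ N · N K δ`; on `B` the integrands differ by at most
`2 M ^ N`. Hence `|t(g, f₁) - t(g, f₂)| ≤ δ M ^ N (N K + 2 r)`.
-/

open MeasureTheory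

/-- The moment `t(g, f)` of a probability-measure-valued kernel `f` on `[0,1]²`:
`∫_{[0,1]^r} ∏_{i ≤ j} (∫ g_{ij} d f(x_i, x_j)) dλ^r`. -/
noncomputable def momentT (r : ℕ) (g : Fin r → Fin r → ℝ → ℝ)
    (f : ℝ → ℝ → Measure ℝ) : ℝ :=
  ∫ x : Fin r → ℝ,
      (∏ p ∈ Finset.univ.filter (fun p : Fin r × Fin r => p.1 ≤ p.2),
        ∫ t, g p.1 p.2 t ∂(f (x p.1) (x p.2)))
    ∂(Measure.pi fun _ : Fin r => volume.restrict (Set.Icc (0:ℝ) 1))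

open Finset ProbabilityTheory

theorem abs_prod_sub_prod_le {ι : Type*} (s : Finset ι) {a b : ι → ℝ} {M : ℝ} (hM : 1 ≤ M)
    (ha : ∀ p ∈ s, |a p| ≤ M) (hb : ∀ p ∈ s, |b p| ≤ M) :
    |∏ p ∈ s, a p - ∏ p ∈ s, b p| ≤ M ^ s.card * ∑ p ∈ s, |a p - b p| := by
  classical
  induction s using Finset.induction_on with
  | empty => simp
  | insert i s hi ih =>
    rw [forall_mem_insert] at ha hb
    set A := ∏ p ∈ s, a p
    set B := ∏ p ∈ s, b p
    have hA : |A| ≤ M ^ s.card := by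
      rw [abs_prod]
      exact (prod_le_prod (fun _ _ => abs_nonneg _) ha.2).trans_eq (prod_const M)
    have hMpow : M ^ s.card ≤ M ^ s.card * M := le_mul_of_one_le_right (by positivity) hM
    rw [prod_insert hi, prod_insert hi, sum_insert hi, card_insert_of_notMem hi, pow_succ]
    calc |a i * A - b i * B| = |(a i - b i) * A + b i * (A - B)| := by ring_nf
      _ ≤ |a i - b i| * |A| + |b i| * |A - B| := by
        rw [← abs_mul, ← abs_mul]; exact abs_add_le _ _
      _ ≤ |a i - b i| * (M ^ s.card * M) + M * (M ^ s.card * ∑ p ∈ s, |a p - b p|) := by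
        gcongr
        · exact hA.trans hMpow
        · exact hb.1
        · exact ih ha.2 hb.2
      _ = M ^ s.card * M * (|a i - b i| + ∑ p ∈ s, |a p - b p|) := by ring

theorem exists_one_le_bound_of_continuousOn {ι X : Type*} [Finite ι] [TopologicalSpace X]
    {s : Set X} (hs : IsCompact s) {g : ι → X → ℝ} (hg : ∀ i, ContinuousOn (g i) s) :
    ∃ M, 1 ≤ M ∧ ∀ i, ∀ t ∈ s, |g i t| ≤ M := by
  choose C hC using fun i => hs.exists_bound_of_continuousOn (hg i)
  obtain ⟨B, hB⟩ := (Set.finite_range C).bddAbove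
  exact ⟨max 1 B, le_max_left _ _, fun i t ht =>
    (hC i t ht).trans ((hB ⟨i, rfl⟩).trans (le_max_right _ _))⟩

theorem abs_integral_le_of_abs_le_on {α : Type*} [MeasurableSpace α] {μ : Measure α}
    [IsProbabilityMeasure μ] {s : Set α} (hμ : μ sᶜ = 0) {g : α → ℝ} {M : ℝ}
    (hg : ∀ t ∈ s, |g t| ≤ M) : |∫ t, g t ∂μ| ≤ M := by
  have h := norm_integral_le_of_norm_le_const (μ := μ) (f := g) (C := M)
    (by filter_upwards [measure_eq_zero_iff_ae_notMem.mp hμ] with t ht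
        simpa using hg t (by simpa using ht))
  simpa using h

theorem abs_integral_le_mul_measureReal_add {α : Type*} [MeasurableSpace α] {μ : Measure α}
    [IsProbabilityMeasure μ] {F : α → ℝ} (hF : AEStronglyMeasurable F μ) {B : Set α}
    (hB : MeasurableSet B) {a b : ℝ} (hb : 0 ≤ b) (hFa : ∀ x, |F x| ≤ a)
    (hFb : ∀ᵐ x ∂μ, x ∉ B → |F x| ≤ b) :
    |∫ x, F x ∂μ| ≤ a * μ.real B + b := by
  have hbound : ∀ᵐ x ∂μ, |F x| ≤ B.indicator (fun _ => a) x + b := by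
    filter_upwards [hFb] with x hx
    by_cases hxB : x ∈ B
    · simpa [hxB] using (hFa x).trans (le_add_of_nonneg_right hb)
    · simpa [hxB] using hx hxB
  have hind : Integrable (B.indicator fun _ => a) μ := (integrable_const a).indicator hB
  calc |∫ x, F x ∂μ| ≤ ∫ x, |F x| ∂μ := abs_integral_le_integral_abs
    _ ≤ ∫ x, (B.indicator (fun _ => a) x + b) ∂μ :=
      integral_mono_ae (Integrable.of_bound hF a (ae_of_all _ hFa)).abs
        (hind.add (integrable_const b)) hbound
    _ = a * μ.real B + b := by
      rw [integral_add hind (integrable_const b), integral_indicator_const _ hB, integral_const]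
      simp [mul_comm]

theorem measure_pi_iUnion_preimage_eval_le {ι X : Type*} [Fintype ι] [MeasurableSpace X]
    (ν : Measure X) [IsProbabilityMeasure ν] {S : Set X} (hS : MeasurableSet S) :
    Measure.pi (fun _ : ι => ν) (⋃ i, Function.eval i ⁻¹' S) ≤ Fintype.card ι * ν S :=
  (measure_iUnion_fintype_le _ _).trans_eq <| by
    simp [(measurePreserving_eval (fun _ : ι => ν) _).measure_preimage hS.nullMeasurableSet]

theorem ae_pi_restrict_forall_mem {ι X : Type*} [Fintype ι] [MeasurableSpace X]
    (ν : Measure X) [SigmaFinite ν] {s : Set X} (hs : MeasurableSet s) :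
    ∀ᵐ x ∂Measure.pi (fun _ : ι => ν.restrict s), ∀ i, x i ∈ s := by
  rw [← Measure.restrict_pi_pi]
  filter_upwards [ae_restrict_mem (MeasurableSet.univ_pi fun _ => hs)] with x hx i
  exact hx i trivial

theorem stronglyMeasurable_integral_of_measurable {α β E : Type*} [MeasurableSpace α]
    [MeasurableSpace β] [NormedAddCommGroup E] [NormedSpace ℝ E] {κ : α → Measure β}
    (hκ : Measurable κ) (hκ₁ : ∀ a, IsProbabilityMeasure (κ a)) {g : β → E}
    (hg : StronglyMeasurable g) : StronglyMeasurable fun a => ∫ t, g t ∂κ a := by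
  let k : Kernel α β := ⟨κ, hκ⟩
  have : IsMarkovKernel k := ⟨hκ₁⟩
  exact (hg.comp_measurable measurable_snd).integral_kernel_prod_right' (κ := k)

theorem abs_integral_sub_integral_le_of_lipschitzWith {X : Type*} [PseudoMetricSpace X]
    [MeasurableSpace X] {μ₁ μ₂ : Measure X} {δ : ℝ}
    (h : ∀ h : X → ℝ, LipschitzWith 1 h → |∫ t, h t ∂μ₁ - ∫ t, h t ∂μ₂| ≤ δ)
    {K : NNReal} (hK : 0 < K) {g : X → ℝ} (hg : LipschitzWith K g) :
    |∫ t, g t ∂μ₁ - ∫ t, g t ∂μ₂| ≤ K * δ := by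
  have hK' : (0 : ℝ) < K := hK
  have hscaled : LipschitzWith 1 fun t => (K : ℝ)⁻¹ • g t := by
    have hnorm : ‖(K : ℝ)⁻¹‖₊ * K = 1 := by
      ext
      simp [hK.ne']
    exact hnorm ▸ (lipschitzWith_smul (K : ℝ)⁻¹).comp hg
  have := h _ hscaled
  rwa [integral_smul, integral_smul, ← smul_sub, smul_eq_mul, abs_mul, abs_inv, abs_of_pos hK',
    inv_mul_le_iff₀ hK'] at this

def upperPairs (r : ℕ) : Finset (Fin r × Fin r) :=
  univ.filter fun p => p.1 ≤ p.2

noncomputable def momentIntegrand (r : ℕ) (g : Fin r → Fin r → ℝ → ℝ)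
    (f : ℝ → ℝ → Measure ℝ) (x : Fin r → ℝ) : ℝ :=
  ∏ p ∈ upperPairs r, ∫ t, g p.1 p.2 t ∂(f (x p.1) (x p.2))

section Moment

variable {r : ℕ} {g : Fin r → Fin r → ℝ → ℝ} {f f₁ f₂ : ℝ → ℝ → Measure ℝ} {M : ℝ}

theorem momentT_eq_integral_momentIntegrand :
    momentT r g f = ∫ x, momentIntegrand r g f x
      ∂(Measure.pi fun _ : Fin r => volume.restrict (Set.Icc (0:ℝ) 1)) :=
  rfl

theorem stronglyMeasurable_momentIntegrand (hf : Measurable (Function.uncurry f))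
    (hp : ∀ x y, IsProbabilityMeasure (f x y)) (hg : ∀ i j, StronglyMeasurable (g i j)) :
    StronglyMeasurable (momentIntegrand r g f) := by
  refine Finset.stronglyMeasurable_fun_prod _ fun p _ => ?_
  have hpair : Measurable fun x : Fin r → ℝ => (x p.1, x p.2) :=
    (measurable_pi_apply p.1).prodMk (measurable_pi_apply p.2)
  exact (stronglyMeasurable_integral_of_measurable hf (fun a => hp a.1 a.2)
    (hg p.1 p.2)).comp_measurable hpair

theorem abs_integral_le_of_abs_le_on_Icc (hp : ∀ x y, IsProbabilityMeasure (f x y))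
    (hs : ∀ x y, f x y (Set.Icc (0:ℝ) 1)ᶜ = 0) (hM : ∀ i j, ∀ t ∈ Set.Icc (0:ℝ) 1, |g i j t| ≤ M)
    (i j : Fin r) (x y : ℝ) : |∫ t, g i j t ∂(f x y)| ≤ M :=
  abs_integral_le_of_abs_le_on (hs x y) (hM i j)

theorem abs_momentIntegrand_le (hp : ∀ x y, IsProbabilityMeasure (f x y))
    (hs : ∀ x y, f x y (Set.Icc (0:ℝ) 1)ᶜ = 0) (hM : ∀ i j, ∀ t ∈ Set.Icc (0:ℝ) 1, |g i j t| ≤ M)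
    (x : Fin r → ℝ) : |momentIntegrand r g f x| ≤ M ^ (upperPairs r).card := by
  rw [momentIntegrand, abs_prod]
  exact (prod_le_prod (fun _ _ => abs_nonneg _)
    fun p _ => abs_integral_le_of_abs_le_on_Icc hp hs hM _ _ _ _).trans_eq (prod_const M)

theorem integrable_momentIntegrand {μ : Measure (Fin r → ℝ)} [IsFiniteMeasure μ]
    (hg : ∀ i j, StronglyMeasurable (g i j)) (hM : ∀ i j, ∀ t ∈ Set.Icc (0:ℝ) 1, |g i j t| ≤ M)
    (hf : Measurable (Function.uncurry f)) (hp : ∀ x y, IsProbabilityMeasure (f x y))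
    (hs : ∀ x y, f x y (Set.Icc (0:ℝ) 1)ᶜ = 0) : Integrable (momentIntegrand r g f) μ :=
  .of_bound (stronglyMeasurable_momentIntegrand hf hp hg).aestronglyMeasurable _
    (ae_of_all _ (abs_momentIntegrand_le hp hs hM))

theorem abs_momentIntegrand_sub_le (hM1 : 1 ≤ M)
    (hM : ∀ i j, ∀ t ∈ Set.Icc (0:ℝ) 1, |g i j t| ≤ M)
    (hp₁ : ∀ x y, IsProbabilityMeasure (f₁ x y)) (hp₂ : ∀ x y, IsProbabilityMeasure (f₂ x y))
    (hs₁ : ∀ x y, f₁ x y (Set.Icc (0:ℝ) 1)ᶜ = 0) (hs₂ : ∀ x y, f₂ x y (Set.Icc (0:ℝ) 1)ᶜ = 0)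
    {η : ℝ} {x : Fin r → ℝ} (hx : ∀ p ∈ upperPairs r,
      |∫ t, g p.1 p.2 t ∂(f₁ (x p.1) (x p.2)) - ∫ t, g p.1 p.2 t ∂(f₂ (x p.1) (x p.2))| ≤ η) :
    |momentIntegrand r g f₁ x - momentIntegrand r g f₂ x| ≤
      M ^ (upperPairs r).card * ((upperPairs r).card * η) := by
  refine (abs_prod_sub_prod_le _ hM1
    (fun _ _ => abs_integral_le_of_abs_le_on_Icc hp₁ hs₁ hM _ _ _ _)
    (fun _ _ => abs_integral_le_of_abs_le_on_Icc hp₂ hs₂ hM _ _ _ _)).trans ?_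
  gcongr
  simpa using sum_le_card_nsmul _ _ _ hx

theorem abs_momentT_sub_le {K : NNReal} (hK : 0 < K) (hg : ∀ i j, LipschitzWith K (g i j))
    (hM1 : 1 ≤ M) (hM : ∀ i j, ∀ t ∈ Set.Icc (0:ℝ) 1, |g i j t| ≤ M) {δ : ℝ} (hδ : 0 ≤ δ)
    (hf₁ : Measurable (Function.uncurry f₁)) (hf₂ : Measurable (Function.uncurry f₂))
    (hp₁ : ∀ x y, IsProbabilityMeasure (f₁ x y)) (hp₂ : ∀ x y, IsProbabilityMeasure (f₂ x y))
    (hs₁ : ∀ x y, f₁ x y (Set.Icc (0:ℝ) 1)ᶜ = 0) (hs₂ : ∀ x y, f₂ x y (Set.Icc (0:ℝ) 1)ᶜ = 0)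
    {S : Set ℝ} (hSm : MeasurableSet S) (hSvol : volume S ≤ ENNReal.ofReal δ)
    (hS : ∀ x ∈ Set.Icc (0:ℝ) 1 \ S, ∀ y ∈ Set.Icc (0:ℝ) 1 \ S,
      ∀ h : ℝ → ℝ, LipschitzWith 1 h → |(∫ t, h t ∂(f₁ x y)) - ∫ t, h t ∂(f₂ x y)| ≤ δ) :
    |momentT r g f₁ - momentT r g f₂| ≤
      δ * (M ^ (upperPairs r).card * ((upperPairs r).card * K + 2 * r)) := by
  have : IsProbabilityMeasure (volume.restrict (Set.Icc (0:ℝ) 1)) := ⟨by simp⟩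
  set μ := Measure.pi fun _ : Fin r => volume.restrict (Set.Icc (0:ℝ) 1)
  set N := (upperPairs r).card
  set B : Set (Fin r → ℝ) := ⋃ i, Function.eval i ⁻¹' S
  have hgm i j := (hg i j).continuous.stronglyMeasurable
  have hint₁ : Integrable (momentIntegrand r g f₁) μ :=
    integrable_momentIntegrand hgm hM hf₁ hp₁ hs₁
  have hint₂ : Integrable (momentIntegrand r g f₂) μ :=
    integrable_momentIntegrand hgm hM hf₂ hp₂ hs₂
  have hB : μ.real B ≤ r * δ := by
    refine ENNReal.toReal_le_of_le_ofReal (by positivity) ?_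
    calc μ B ≤ r * volume.restrict (Set.Icc (0:ℝ) 1) S := by
          simpa using measure_pi_iUnion_preimage_eval_le (ι := Fin r)
            (volume.restrict (Set.Icc (0:ℝ) 1)) hSm
      _ ≤ r * ENNReal.ofReal δ := by gcongr; exact (Measure.restrict_le_self S).trans hSvol
      _ = ENNReal.ofReal (r * δ) := by rw [ENNReal.ofReal_mul (by positivity)]; simp
  have hfar : ∀ x, |momentIntegrand r g f₁ x - momentIntegrand r g f₂ x| ≤ 2 * M ^ N := by
    intro x
    have h₁ := abs_momentIntegrand_le hp₁ hs₁ hM x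
    have h₂ := abs_momentIntegrand_le hp₂ hs₂ hM x
    linarith [abs_sub (momentIntegrand r g f₁ x) (momentIntegrand r g f₂ x)]
  have hnear : ∀ᵐ x ∂μ, x ∉ B →
      |momentIntegrand r g f₁ x - momentIntegrand r g f₂ x| ≤ M ^ N * (N * (K * δ)) := by
    filter_upwards [ae_pi_restrict_forall_mem volume measurableSet_Icc] with x hx hxB
    simp only [B, Set.mem_iUnion, Set.mem_preimage, Function.eval, not_exists] at hxB
    exact abs_momentIntegrand_sub_le hM1 hM hp₁ hp₂ hs₁ hs₂ fun p _ =>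
      abs_integral_sub_integral_le_of_lipschitzWith
        (hS _ ⟨hx p.1, hxB p.1⟩ _ ⟨hx p.2, hxB p.2⟩) hK (hg p.1 p.2)
  rw [momentT_eq_integral_momentIntegrand, momentT_eq_integral_momentIntegrand,
    ← integral_sub hint₁ hint₂]
  calc _ ≤ 2 * M ^ N * μ.real B + M ^ N * (N * (K * δ)) :=
        abs_integral_le_mul_measureReal_add (hint₁.sub hint₂).aestronglyMeasurable
          (MeasurableSet.iUnion fun i => measurable_pi_apply i hSm) (by positivity) hfar hnear
    _ ≤ 2 * M ^ N * (r * δ) + M ^ N * (N * (K * δ)) := by gcongr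
    _ = _ := by ring

end Moment

theorem momentT_continuous_in_cut_distance_general
    (r : ℕ) (K : NNReal) (hK : 0 < K)
    (g : Fin r → Fin r → ℝ → ℝ) (hg : ∀ i j, LipschitzWith K (g i j))
    (ε : ℝ) (hε : 0 < ε) :
    ∃ δ : ℝ, 0 < δ ∧
      ∀ f₁ f₂ : ℝ → ℝ → Measure ℝ,
        Measurable (Function.uncurry f₁) → Measurable (Function.uncurry f₂) →
        (∀ x y, IsProbabilityMeasure (f₁ x y)) →
        (∀ x y, IsProbabilityMeasure (f₂ x y)) →
        (∀ x y, f₁ x y (Set.Icc (0:ℝ) 1)ᶜ = 0) →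
        (∀ x y, f₂ x y (Set.Icc (0:ℝ) 1)ᶜ = 0) →
        (∃ S : Set ℝ, MeasurableSet S ∧ volume S ≤ ENNReal.ofReal δ ∧
          ∀ x ∈ Set.Icc (0:ℝ) 1 \ S, ∀ y ∈ Set.Icc (0:ℝ) 1 \ S,
            ∀ h : ℝ → ℝ, LipschitzWith 1 h →
              |(∫ t, h t ∂(f₁ x y)) - ∫ t, h t ∂(f₂ x y)| ≤ δ) →
        |momentT r g f₁ - momentT r g f₂| < ε := by
  obtain ⟨M, hM1, hM⟩ := exists_one_le_bound_of_continuousOn (ι := Fin r × Fin r) isCompact_Icc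
    (g := fun p => g p.1 p.2) fun p => (hg p.1 p.2).continuous.continuousOn
  set C := M ^ (upperPairs r).card * ((upperPairs r).card * K + 2 * r)
  have hC : 0 ≤ C := by positivity
  refine ⟨ε / (C + 1), by positivity, ?_⟩
  rintro f₁ f₂ hf₁ hf₂ hp₁ hp₂ hs₁ hs₂ ⟨S, hSm, hSvol, hS⟩
  calc |momentT r g f₁ - momentT r g f₂| ≤ ε / (C + 1) * C :=
        abs_momentT_sub_le hK hg hM1 (fun i j => hM (i, j)) (by positivity)
          hf₁ hf₂ hp₁ hp₂ hs₁ hs₂ hSm hSvol hS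
    _ < ε := by
      rw [div_mul_eq_mul_div, div_lt_iff₀ (by positivity)]
      linarith

/-- (Lemma `lcs1`.)  Fix `r ≥ 1`, `K > 0` and `K`-Lipschitz functions
`g_{ij}`.  For every `ε > 0` there is `δ > 0` such that whenever two Borel kernels
`f₁, f₂ : [0,1]² → P([0,1])` satisfy `d_ext(f₁(x,y), f₂(x,y)) ≤ δ` outside a set
`S × [0,1] ∪ [0,1] × S` with `λ S ≤ δ` (i.e. `□₁(f₁, f₂) ≤ δ`), then
`|t(g, f₁) - t(g, f₂)| < ε`. -/
theorem momentT_continuous_in_cut_distance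
    (r : ℕ) (hr : 1 ≤ r) (K : NNReal) (hK : 0 < K)
    (g : Fin r → Fin r → ℝ → ℝ) (hg : ∀ i j, LipschitzWith K (g i j))
    (ε : ℝ) (hε : 0 < ε) :
    ∃ δ : ℝ, 0 < δ ∧
      ∀ f₁ f₂ : ℝ → ℝ → Measure ℝ,
        Measurable (Function.uncurry f₁) → Measurable (Function.uncurry f₂) →
        (∀ x y, IsProbabilityMeasure (f₁ x y)) →
        (∀ x y, IsProbabilityMeasure (f₂ x y)) →
        (∀ x y, f₁ x y (Set.Icc (0:ℝ) 1)ᶜ = 0) →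
        (∀ x y, f₂ x y (Set.Icc (0:ℝ) 1)ᶜ = 0) →
        (∃ S : Set ℝ, MeasurableSet S ∧ volume S ≤ ENNReal.ofReal δ ∧
          ∀ x ∈ Set.Icc (0:ℝ) 1 \ S, ∀ y ∈ Set.Icc (0:ℝ) 1 \ S,
            ∀ h : ℝ → ℝ, LipschitzWith 1 h →
              |(∫ t, h t ∂(f₁ x y)) - ∫ t, h t ∂(f₂ x y)| ≤ δ) →
        |momentT r g f₁ - momentT r g f₂| < ε :=
  momentT_continuous_in_cut_distance_general r K hK g hg ε hε
end

section
/- Let {Y_{ij}}_{1 ≤ i < j} be independent random variables on a probability space (Ω, P), each with values in [0,1]; extend the array symmetrically by Y_{ji} = Y_{ij} and Y_{ii} = 0. Fix ε > 0. Then for P-almost every ω, lim_{n→∞} max over all pairs of subsets A, B ⊆ {1,…,n} with |A| ≥ εn and |B| ≥ εn of | (Σ_{i∈A, j∈B} Y_{ij}(ω)) / (|A||B|) − (Σ_{i∈A, j∈B} E[Y_{ij}]) / (|A||B|) | = 0. -/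
open MeasureTheory ProbabilityTheory Filter Topology

/-- Symmetric extension (with zero diagonal) of an array indexed by pairs `i < j`. -/
noncomputable def symmExtArr {Ω : Type*} (Y : {p : ℕ × ℕ // p.1 < p.2} → Ω → ℝ)
    (i j : ℕ) (ω : Ω) : ℝ :=
  if h : i < j then Y ⟨(i, j), h⟩ ω else if h' : j < i then Y ⟨(j, i), h'⟩ ω else 0

/-!
After centering, `Z e := Y e - E[Y e]` is sub-Gaussian with parameter `1/4` (Hoeffding's lemma),
and the centered double sum over `A × B` is the sum of `Z` over the edges `i < j` from `A` to `B`
plus the sum over the edges from `B` to `A`. Each of these is a sum of at most `n²` independent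
sub-Gaussian variables, so Hoeffding's inequality bounds the probability that it reaches `δ n²/2`
by `2 exp (-δ² n² / 2)`. A union bound over the `4ⁿ` pairs `(A, B)` leaves a summable sequence, and
Borel–Cantelli shows that almost surely, for large `n`, every such double sum is below `δ n²`.
Dividing by `|A| |B| ≥ ε² n²` makes all averages `δ / ε²`-close, for every `δ` in a countable
sequence tending to `0`.
-/

section

open Finset Real

namespace ProbabilityTheory.HasSubgaussianMGF

variable {Ω : Type*} [MeasurableSpace Ω] {μ : Measure Ω} {X : Ω → ℝ} {c d : NNReal}

lemma mono (h : HasSubgaussianMGF X c μ) (hcd : c ≤ d) : HasSubgaussianMGF X d μ where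
  integrable_exp_mul := h.integrable_exp_mul
  mgf_le t := (h.mgf_le t).trans <| exp_le_exp.2 <| by gcongr

lemma measureReal_le_abs_le (h : HasSubgaussianMGF X c μ) {t : ℝ} (ht : 0 ≤ t) :
    μ.real {ω | t ≤ |X ω|} ≤ 2 * exp (-t ^ 2 / (2 * c)) := by
  have hsplit : {ω | t ≤ |X ω|} = {ω | t ≤ X ω} ∪ {ω | t ≤ (-X) ω} := by
    ext ω; simp [le_abs]
  calc μ.real {ω | t ≤ |X ω|}
      ≤ μ.real {ω | t ≤ X ω} + μ.real {ω | t ≤ (-X) ω} := hsplit ▸ measureReal_union_le _ _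
    _ ≤ exp (-t ^ 2 / (2 * c)) + exp (-t ^ 2 / (2 * c)) :=
      add_le_add (h.measure_ge_le ht) (h.neg.measure_ge_le ht)
    _ = 2 * exp (-t ^ 2 / (2 * c)) := by ring

end ProbabilityTheory.HasSubgaussianMGF

lemma summable_pow_mul_exp_neg_mul_sq (r : ℝ) {c : ℝ} (hc : 0 < c) :
    Summable fun n : ℕ => r ^ n * exp (-c * n ^ 2) := by
  have hlim : Tendsto (fun n : ℕ => r * exp (-c * n)) atTop (𝓝 0) := by
    simpa using (tendsto_exp_atBot.comp (tendsto_natCast_atTop_atTop.const_mul_atTop_of_neg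
      (neg_neg_of_pos hc))).const_mul r
  refine summable_geometric_two.of_norm_bounded_eventually_nat ?_
  filter_upwards [hlim.norm.eventually (ge_mem_nhds (by norm_num : ‖(0:ℝ)‖ < 1 / 2))] with n hn
  have hpow : r ^ n * exp (-c * n ^ 2) = (r * exp (-c * n)) ^ n := by
    rw [mul_pow, ← exp_nat_mul]; ring_nf
  rw [hpow, norm_pow, one_div]
  exact pow_le_pow_left₀ (norm_nonneg _) (by simpa using hn) n

lemma ae_eventually_forall_subset_range_notMem {α : Type*} [MeasurableSpace α] {μ : Measure α}
    {E : ℕ → Finset ℕ → Finset ℕ → Set α} {b : ℕ → ℝ} (hb0 : ∀ n, 0 ≤ b n)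
    (hb : Summable fun n => 4 ^ n * b n)
    (hE : ∀ n, ∀ A ⊆ range n, ∀ B ⊆ range n, μ (E n A B) ≤ ENNReal.ofReal (b n)) :
    ∀ᵐ x ∂μ, ∀ᶠ n in atTop, ∀ A ⊆ range n, ∀ B ⊆ range n, x ∉ E n A B := by
  set G : ℕ → Set α := fun n => ⋃ A ∈ (range n).powerset, ⋃ B ∈ (range n).powerset, E n A B
  have hG (n : ℕ) : μ (G n) ≤ ENNReal.ofReal (4 ^ n * b n) :=
    calc μ (G n) ≤ ∑ A ∈ (range n).powerset, ∑ B ∈ (range n).powerset, μ (E n A B) :=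
          (measure_biUnion_finset_le _ _).trans
            (sum_le_sum fun A _ => measure_biUnion_finset_le _ _)
      _ ≤ ∑ A ∈ (range n).powerset, ∑ B ∈ (range n).powerset, ENNReal.ofReal (b n) :=
          sum_le_sum fun A hA => sum_le_sum fun B hB =>
            hE n A (mem_powerset.1 hA) B (mem_powerset.1 hB)
      _ = ENNReal.ofReal (4 ^ n * b n) := by
          rw [ENNReal.ofReal_mul (by positivity)]
          simp only [sum_const, card_powerset, card_range, nsmul_eq_mul]
          rw [← mul_assoc, ← Nat.cast_mul, ← mul_pow, ENNReal.ofReal_pow (by norm_num)]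
          norm_num
  have hsum : ∑' n, μ (G n) ≠ ⊤ := by
    refine ne_top_of_le_ne_top ?_ (ENNReal.tsum_le_tsum hG)
    rw [← ENNReal.ofReal_tsum_of_nonneg (fun n => mul_nonneg (by positivity) (hb0 n)) hb]
    exact ENNReal.ofReal_ne_top
  filter_upwards [ae_eventually_notMem hsum] with x hx
  filter_upwards [hx] with n hn A hA B hB hxE
  exact hn (Set.mem_iUnion₂.2 ⟨A, mem_powerset.2 hA, Set.mem_iUnion₂.2 ⟨B, mem_powerset.2 hB, hxE⟩⟩)

def edgesBetween (A B : Finset ℕ) : Finset {p : ℕ × ℕ // p.1 < p.2} :=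
  (A ×ˢ B).subtype fun p => p.1 < p.2

lemma card_edgesBetween_le_sq {n : ℕ} {A B : Finset ℕ} (hA : A ⊆ range n) (hB : B ⊆ range n) :
    #(edgesBetween A B) ≤ n ^ 2 :=
  calc #(edgesBetween A B) ≤ #(A ×ˢ B) := by
        rw [edgesBetween, card_subtype]
        exact card_filter_le _ _
    _ ≤ #(range n ×ˢ range n) := card_le_card (product_subset_product hA hB)
    _ = n ^ 2 := by rw [card_product, card_range, sq]

section symmExtArr

variable {Ω : Type*} (Y : {p : ℕ × ℕ // p.1 < p.2} → Ω → ℝ)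

lemma symmExtArr_of_lt {i j : ℕ} (h : i < j) (ω : Ω) : symmExtArr Y i j ω = Y ⟨(i, j), h⟩ ω :=
  dif_pos h

lemma symmExtArr_comm (i j : ℕ) (ω : Ω) : symmExtArr Y i j ω = symmExtArr Y j i ω := by
  unfold symmExtArr
  rcases lt_trichotomy i j with h | rfl | h
  · rw [dif_pos h, dif_neg h.asymm, dif_pos h]
  · rfl
  · rw [dif_neg h.asymm, dif_pos h, dif_pos h]

lemma symmExtArr_self (i : ℕ) (ω : Ω) : symmExtArr Y i i ω = 0 := by
  simp [symmExtArr]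

lemma symmExtArr_sub_integral [MeasurableSpace Ω] (P : Measure Ω) (i j : ℕ) (ω : Ω) :
    symmExtArr Y i j ω - ∫ ω', symmExtArr Y i j ω' ∂P
      = symmExtArr (fun e ω => Y e ω - ∫ ω', Y e ω' ∂P) i j ω := by
  unfold symmExtArr
  split_ifs <;> simp

lemma sum_sum_symmExtArr (A B : Finset ℕ) (ω : Ω) :
    ∑ i ∈ A, ∑ j ∈ B, symmExtArr Y i j ω
      = ∑ e ∈ edgesBetween A B, Y e ω + ∑ e ∈ edgesBetween B A, Y e ω := by
  have hedges (S : Finset (ℕ × ℕ)) :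
      ∑ e ∈ S.subtype (fun p => p.1 < p.2), Y e ω
        = ∑ p ∈ S with p.1 < p.2, symmExtArr Y p.1 p.2 ω := by
    rw [← sum_subtype_eq_sum_filter]
    exact sum_congr rfl fun e _ => (symmExtArr_of_lt Y e.2 ω).symm
  have hlower : ∑ p ∈ A ×ˢ B with ¬ p.1 < p.2, symmExtArr Y p.1 p.2 ω
      = ∑ p ∈ B ×ˢ A with p.1 < p.2, symmExtArr Y p.1 p.2 ω := by
    rw [← sum_filter_of_ne (p := fun p => p.2 < p.1), filter_filter]
    · refine sum_equiv (Equiv.prodComm ℕ ℕ) (fun p => ?_) fun p _ => symmExtArr_comm Y _ _ ω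
      simp only [mem_filter, mem_product, Equiv.prodComm_apply, Prod.fst_swap, Prod.snd_swap]
      constructor
      · rintro ⟨⟨hA, hB⟩, -, h⟩; exact ⟨⟨hB, hA⟩, h⟩
      · rintro ⟨⟨hB, hA⟩, h⟩; exact ⟨⟨hA, hB⟩, h.not_gt, h⟩
    · intro p hp hne
      refine (not_lt.1 (mem_filter.1 hp).2).lt_of_ne fun h => hne ?_
      rw [h, symmExtArr_self]
  rw [← sum_product', ← sum_filter_add_sum_filter_not _ (fun p => p.1 < p.2), hlower,
    edgesBetween, edgesBetween, hedges, hedges]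

end symmExtArr

lemma measure_le_abs_sum_edgesBetween_le {Ω : Type*} [MeasurableSpace Ω] {P : Measure Ω}
    {Z : {p : ℕ × ℕ // p.1 < p.2} → Ω → ℝ} {c : NNReal} (hZ : ∀ e, HasSubgaussianMGF (Z e) c P)
    (hindep : iIndepFun Z P) {n : ℕ} {A B : Finset ℕ} (hA : A ⊆ range n) (hB : B ⊆ range n)
    {t : ℝ} (ht : 0 ≤ t) :
    P {ω | t ≤ |∑ e ∈ edgesBetween A B, Z e ω|}
      ≤ ENNReal.ofReal (2 * exp (-t ^ 2 / (2 * (n ^ 2 * c)))) := by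
  have := hindep.isProbabilityMeasure
  have hsum : HasSubgaussianMGF (fun ω => ∑ e ∈ edgesBetween A B, Z e ω) (n ^ 2 * c) P := by
    refine (HasSubgaussianMGF.sum_of_iIndepFun hindep fun e _ => hZ e).mono ?_
    rw [sum_const, nsmul_eq_mul]
    gcongr
    exact_mod_cast card_edgesBetween_le_sq hA hB
  rw [ENNReal.le_ofReal_iff_toReal_le (measure_ne_top _ _) (by positivity)]
  exact_mod_cast hsum.measureReal_le_abs_le ht

lemma ae_eventually_abs_sum_sum_symmExtArr_lt {Ω : Type*} [MeasurableSpace Ω] {P : Measure Ω}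
    {Z : {p : ℕ × ℕ // p.1 < p.2} → Ω → ℝ} {c : NNReal} (hc : 0 < c)
    (hZ : ∀ e, HasSubgaussianMGF (Z e) c P) (hindep : iIndepFun Z P) {δ : ℝ} (hδ : 0 < δ) :
    ∀ᵐ ω ∂P, ∀ᶠ n : ℕ in atTop, ∀ A ⊆ range n, ∀ B ⊆ range n,
      |∑ i ∈ A, ∑ j ∈ B, symmExtArr Z i j ω| < δ * n ^ 2 := by
  have hbad (n : ℕ) (A : Finset ℕ) (hA : A ⊆ range n) (B : Finset ℕ) (hB : B ⊆ range n) :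
      P {ω | δ * n ^ 2 / 2 ≤ |∑ e ∈ edgesBetween A B, Z e ω|}
        ≤ ENNReal.ofReal (2 * exp (-(δ ^ 2 / (8 * c)) * n ^ 2)) := by
    refine (measure_le_abs_sum_edgesBetween_le hZ hindep hA hB (by positivity)).trans_eq ?_
    congr 3
    rcases eq_or_ne n 0 with rfl | hn
    · simp
    · field_simp
      ring
  have hsummable : Summable fun n : ℕ => 4 ^ n * (2 * exp (-(δ ^ 2 / (8 * c)) * n ^ 2)) := by
    simpa [mul_left_comm] using (summable_pow_mul_exp_neg_mul_sq 4 (by positivity)).mul_left 2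
  filter_upwards [ae_eventually_forall_subset_range_notMem (fun n => by positivity) hsummable hbad]
    with ω hω
  filter_upwards [hω] with n hn A hA B hB
  have hAB := hn A hA B hB
  have hBA := hn B hB A hA
  simp only [not_le] at hAB hBA
  rw [sum_sum_symmExtArr]
  linarith [abs_add_le (∑ e ∈ edgesBetween A B, Z e ω) (∑ e ∈ edgesBetween B A, Z e ω)]

lemma sSup_abs_div_sub_div_le {g h : ℕ → ℕ → ℝ} {ε δ : ℝ} (hε : 0 < ε) (hδ : 0 ≤ δ) {n : ℕ}
    (hbound : ∀ A ⊆ range n, ∀ B ⊆ range n,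
      |∑ i ∈ A, ∑ j ∈ B, g i j - ∑ i ∈ A, ∑ j ∈ B, h i j| ≤ δ * n ^ 2) :
    sSup {v : ℝ | ∃ A B : Finset ℕ, A ⊆ range n ∧ B ⊆ range n ∧ ε * n ≤ #A ∧ ε * n ≤ #B ∧
      v = |(∑ i ∈ A, ∑ j ∈ B, g i j) / (#A * #B) - (∑ i ∈ A, ∑ j ∈ B, h i j) / (#A * #B)|}
      ≤ δ / ε ^ 2 := by
  refine Real.sSup_le ?_ (by positivity)
  rintro v ⟨A, B, hA, hB, hεA, hεB, rfl⟩
  rw [← sub_div, abs_div, abs_of_nonneg (a := (#A : ℝ) * #B) (by positivity)]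
  refine div_le_of_le_mul₀ (by positivity) (by positivity) ?_
  calc |∑ i ∈ A, ∑ j ∈ B, g i j - ∑ i ∈ A, ∑ j ∈ B, h i j|
      ≤ δ * n ^ 2 := hbound A hA B hB
    _ = δ / ε ^ 2 * ((ε * n) * (ε * n)) := by field_simp
    _ ≤ δ / ε ^ 2 * (#A * #B) := by gcongr

end

/-- (Lemma `limeszlemma`, abstract form.)  For an independent array
`{Y_{ij}}_{i<j}` of `[0,1]`-valued random variables (extended symmetrically with zero
diagonal) and any `ε > 0`, almost surely the maximal deviation
`max_{A,B ⊆ {1,…,n}, |A|,|B| ≥ εn} |avg_{A×B} Y_{ij}(ω) - avg_{A×B} E[Y_{ij}]|`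
tends to `0` as `n → ∞`. -/
theorem independent_array_uniform_averages
    (Ω : Type*) [MeasurableSpace Ω] (P : Measure Ω) [IsProbabilityMeasure P]
    (Y : {p : ℕ × ℕ // p.1 < p.2} → Ω → ℝ)
    (hmeas : ∀ e, Measurable (Y e))
    (hrange : ∀ e ω, Y e ω ∈ Set.Icc (0:ℝ) 1)
    (hindep : iIndepFun Y P)
    (ε : ℝ) (hε : 0 < ε) :
    ∀ᵐ ω ∂P, Tendsto
      (fun n : ℕ => sSup {v : ℝ | ∃ A B : Finset ℕ,
        A ⊆ Finset.range n ∧ B ⊆ Finset.range n ∧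
        ε * n ≤ A.card ∧ ε * n ≤ B.card ∧
        v = |(∑ i ∈ A, ∑ j ∈ B, symmExtArr Y i j ω) / (A.card * B.card) -
              (∑ i ∈ A, ∑ j ∈ B, ∫ ω', symmExtArr Y i j ω' ∂P) / (A.card * B.card)|})
      atTop (𝓝 0) := by
  set Z : {p : ℕ × ℕ // p.1 < p.2} → Ω → ℝ := fun e ω => Y e ω - ∫ ω', Y e ω' ∂P
  have hZ (e) : HasSubgaussianMGF (Z e) ((‖(1:ℝ) - 0‖₊ / 2) ^ 2) P :=
    hasSubgaussianMGF_of_mem_Icc (hmeas e).aemeasurable (ae_of_all _ (hrange e))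
  have hZindep : iIndepFun Z P := hindep.comp _ fun e => measurable_id.sub_const _
  have hdev : ∀ᵐ ω ∂P, ∀ k : ℕ, ∀ᶠ n : ℕ in atTop, ∀ A ⊆ Finset.range n,
      ∀ B ⊆ Finset.range n, |∑ i ∈ A, ∑ j ∈ B, symmExtArr Z i j ω| < ε ^ 2 / (k + 1) * n ^ 2 :=
    ae_all_iff.2 fun k =>
      ae_eventually_abs_sum_sum_symmExtArr_lt (by norm_num) hZ hZindep (by positivity)
  filter_upwards [hdev] with ω hω
  refine tendsto_order.2 ⟨fun a ha => Eventually.of_forall fun n => ha.trans_le ?_, fun a ha => ?_⟩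
  · exact Real.sSup_nonneg fun v ⟨_, _, _, _, _, _, hv⟩ => hv ▸ abs_nonneg _
  obtain ⟨k, hk⟩ := exists_nat_one_div_lt ha
  filter_upwards [hω k] with n hn
  refine (sSup_abs_div_sub_div_le (δ := ε ^ 2 / (k + 1)) hε (by positivity)
    fun A hA B hB => ?_).trans_lt ?_
  · simp only [← Finset.sum_sub_distrib, symmExtArr_sub_integral]
    exact (hn A hA B hB).le
  · convert hk using 1
    field_simp
end
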